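/- arXiv:1603.07622 — 2 statements merged into one kernel-verified Lean document; each statement's English description precedes it below -/
import Mathlib

section
/- For every ν > 0 and every z ∈ ℝ, the modified parabolic cylinder function is strictly positive: D̃_ν(z) > 0. -/
open Real Filter Finset MeasureTheory

/-- The even power series `u(z) = 1 + ∑_{k=1}^∞ (∏_{j=0}^{k-1}(ν+2j)) z^{2k}/(2k)!`
(the `k = 0` term of the `tsum` equals `1`). -/
noncomputable def evenSeries (ν z : ℝ) : ℝ :=
  ∑' k : ℕ, (∏ j ∈ Finset.range k, (ν + 2 * (j : ℝ))) * z ^ (2 * k) / (Nat.factorial (2 * k))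

/-- The odd power series `v(z) = ∑_{k=0}^∞ (∏_{j=0}^{k-1}(ν+2j+1)) z^{2k+1}/(2k+1)!`
(the `k = 0` term equals `z`). -/
noncomputable def oddSeries (ν z : ℝ) : ℝ :=
  ∑' k : ℕ, (∏ j ∈ Finset.range k, (ν + 2 * (j : ℝ) + 1)) * z ^ (2 * k + 1) /
    (Nat.factorial (2 * k + 1))

/-- The modified parabolic cylinder function
`D̃_ν(y) = 2^{−ν/2} √π [ (1 + ∑_{k≥1} ∏_{j=0}^{k-1}(ν+2j) y^{2k}/(2k)!)/Γ((ν+1)/2)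
  − √2 y (1 + ∑_{k≥1} ∏_{j=0}^{k-1}(ν+2j+1) y^{2k}/(2k+1)!)/Γ(ν/2) ]`,
which equals `e^{y²/4} D_{−ν}(y)` for the parabolic cylinder function `D_{−ν}`.
Note `y * (1 + ∑_{k≥1} ∏_{j=0}^{k-1}(ν+2j+1) y^{2k}/(2k+1)!) = oddSeries ν y`. -/
noncomputable def Dtilde (ν : ℝ) (y : ℝ) : ℝ :=
  (2 : ℝ) ^ (-ν / 2) * Real.sqrt Real.pi *
    (evenSeries ν y / Real.Gamma ((ν + 1) / 2) -
      Real.sqrt 2 * oddSeries ν y / Real.Gamma (ν / 2))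

open Set
open scoped Nat

/-!
Classically `D̃_ν(z) = Γ(ν)⁻¹ ∫₀^∞ t^(ν-1) e^(-t²/2) e^(-zt) dt`, whose integrand is positive.
To prove this representation, expand `e^(-zt)` in its power series and integrate termwise (the
series is dominated by `e^(|z|t)`): the `n`-th term becomes `(-z)^n/n!` times the half-Gaussian
moment `2^((ν+n)/2-1) Γ((ν+n)/2)`. By `Γ(s + k) = Γ(s) s (s+1) ⋯ (s+k-1)` the even and the odd
terms recombine into the two power series of `D̃_ν`, and Legendre's duplication formula
`Γ(ν/2) Γ((ν+1)/2) = 2^(1-ν) √π Γ(ν)` matches the constants.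
-/

theorem Real.hasSum_pow_div_factorial (x : ℝ) : HasSum (fun n : ℕ => x ^ n / n !) (exp x) :=
  Real.exp_eq_exp_ℝ ▸ NormedSpace.expSeries_div_hasSum_exp x

theorem hasSum_integral_mul_exp_mul {μ : Measure ℝ} {g : ℝ → ℝ} (c : ℝ)
    (hg : Integrable (fun t => g t * exp (|c| * |t|)) μ) :
    HasSum (fun n : ℕ => c ^ n / n ! * ∫ t, t ^ n * g t ∂μ) (∫ t, g t * exp (c * t) ∂μ) := by
  have hg_meas : AEStronglyMeasurable g μ := by
    refine (hg.aestronglyMeasurable.mul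
      (by fun_prop : Continuous fun t => exp (-(|c| * |t|))).aestronglyMeasurable).congr
      (ae_of_all _ fun t => ?_)
    simp [mul_assoc, ← exp_add]
  simp_rw [← integral_const_mul]
  refine hasSum_integral_of_dominated_convergence (fun n t => ‖g t‖ * ((|c| * |t|) ^ n / n !))
    (fun n => ((continuous_pow n).aestronglyMeasurable.mul hg_meas).const_mul _)
    (fun n => ae_of_all _ fun t => le_of_eq ?_)
    (ae_of_all _ fun t => ((hasSum_pow_div_factorial _).mul_left _).summable) ?_
    (ae_of_all _ fun t => ?_)
  · simp only [norm_mul, norm_div, norm_pow, Real.norm_eq_abs, Nat.abs_cast, mul_pow]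
    ring
  · refine hg.norm.congr (ae_of_all _ fun t => ?_)
    simp only [((hasSum_pow_div_factorial _).mul_left _).tsum_eq, norm_mul,
      Real.norm_of_nonneg (exp_pos _).le]
  · refine ((hasSum_pow_div_factorial (c * t)).mul_left (g t)).congr_fun fun n => ?_
    rw [mul_pow]
    ring

noncomputable def halfGaussMoment (s : ℝ) : ℝ := 2 ^ (s / 2 - 1) * Gamma (s / 2)

theorem halfGaussMoment_pos {s : ℝ} (hs : 0 < s) : 0 < halfGaussMoment s :=
  mul_pos (rpow_pos_of_pos two_pos _) (Gamma_pos_of_pos (half_pos hs))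

theorem integral_Ioi_rpow_mul_exp_neg_sq_div_two {s : ℝ} (hs : 0 < s) :
    ∫ t in Ioi (0 : ℝ), t ^ (s - 1) * exp (-t ^ 2 / 2) = halfGaussMoment s := by
  have h := integral_rpow_mul_exp_neg_mul_rpow two_pos (by linarith : -1 < s - 1) one_half_pos
  simp only [rpow_two, sub_add_cancel] at h
  calc ∫ t in Ioi (0 : ℝ), t ^ (s - 1) * exp (-t ^ 2 / 2)
      = ∫ t in Ioi (0 : ℝ), t ^ (s - 1) * exp (-(1 / 2) * t ^ 2) := by
        congr 1; ext t; ring_nf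
    _ = (1 / 2 : ℝ) ^ (-s / 2) * (1 / 2) * Gamma (s / 2) := h
    _ = halfGaussMoment s := by
        rw [halfGaussMoment, one_div, inv_rpow zero_le_two, ← rpow_neg zero_le_two,
          rpow_sub two_pos, rpow_one]
        ring_nf

theorem Real.Gamma_add_nat_eq_mul_prod {s : ℝ} (hs : ∀ m : ℕ, s ≠ -m) (k : ℕ) :
    Gamma (s + k) = Gamma s * ∏ j ∈ range k, (s + j) := by
  induction k with
  | zero => simp
  | succ k ih =>
    have hsk : s + k ≠ 0 := fun h => hs k (eq_neg_of_add_eq_zero_left h)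
    rw [Nat.cast_succ, ← add_assoc, Gamma_add_one hsk, ih, prod_range_succ]
    ring

theorem halfGaussMoment_add_two_mul_nat {x : ℝ} (hx : 0 < x) (k : ℕ) :
    halfGaussMoment (x + 2 * k) = halfGaussMoment x * ∏ j ∈ range k, (x + 2 * j) := by
  have hΓ := Gamma_add_nat_eq_mul_prod (s := x / 2)
    (fun m h => by have : (0 : ℝ) ≤ m := m.cast_nonneg; linarith [half_pos hx]) k
  have h2 : (2 : ℝ) ^ k * ∏ j ∈ range k, (x / 2 + j) = ∏ j ∈ range k, (x + 2 * j) := by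
    nth_rw 1 [← card_range k]
    rw [pow_card_mul_prod]
    exact prod_congr rfl fun j _ => by ring
  rw [halfGaussMoment, halfGaussMoment, show (x + 2 * k) / 2 = x / 2 + k by ring, hΓ,
    show x / 2 + k - 1 = (x / 2 - 1) + k by ring, rpow_add two_pos, rpow_natCast, ← h2]
  ring

theorem integrableOn_Ioi_rpow_mul_exp_neg_sq_div_two_mul_exp {ν : ℝ} (hν : 0 < ν) (c : ℝ) :
    IntegrableOn (fun t => t ^ (ν - 1) * exp (-t ^ 2 / 2) * exp (c * t)) (Ioi 0) := by
  refine ((integrableOn_rpow_mul_exp_neg_mul_sq (by norm_num : (0 : ℝ) < 1 / 4)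
    (by linarith : -1 < ν - 1)).const_mul (exp (c ^ 2))).mono' (by fun_prop) ?_
  filter_upwards [ae_restrict_mem measurableSet_Ioi] with t ht
  have hexp : exp (-t ^ 2 / 2) * exp (c * t) ≤ exp (c ^ 2) * exp (-(1 / 4) * t ^ 2) := by
    rw [← exp_add, ← exp_add]
    exact exp_le_exp.mpr (by nlinarith [sq_nonneg (t / 2 - c)])
  have ht_rpow : 0 ≤ t ^ (ν - 1) := rpow_nonneg (le_of_lt ht) _
  rw [Real.norm_of_nonneg (by positivity)]
  calc t ^ (ν - 1) * exp (-t ^ 2 / 2) * exp (c * t)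
      = t ^ (ν - 1) * (exp (-t ^ 2 / 2) * exp (c * t)) := mul_assoc _ _ _
    _ ≤ t ^ (ν - 1) * (exp (c ^ 2) * exp (-(1 / 4) * t ^ 2)) := by gcongr
    _ = exp (c ^ 2) * (t ^ (ν - 1) * exp (-(1 / 4) * t ^ 2)) := by ring

theorem setIntegral_Ioi_rpow_mul_exp_neg_sq_div_two_mul_exp_pos {ν : ℝ} (hν : 0 < ν) (c : ℝ) :
    0 < ∫ t in Ioi (0 : ℝ), t ^ (ν - 1) * exp (-t ^ 2 / 2) * exp (c * t) := by
  have hpos : ∀ t ∈ Ioi (0 : ℝ), 0 < t ^ (ν - 1) * exp (-t ^ 2 / 2) * exp (c * t) :=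
    fun t ht => by have := rpow_pos_of_pos (mem_Ioi.mp ht) (ν - 1); positivity
  rw [setIntegral_pos_iff_support_of_nonneg_ae
    (ae_restrict_of_forall_mem measurableSet_Ioi fun t ht => (hpos t ht).le)
    (integrableOn_Ioi_rpow_mul_exp_neg_sq_div_two_mul_exp hν c),
    inter_eq_right.mpr fun t ht => Function.mem_support.mpr (hpos t ht).ne', volume_Ioi]
  exact ENNReal.zero_lt_top

theorem hasSum_pow_div_factorial_mul_halfGaussMoment {ν : ℝ} (hν : 0 < ν) (c : ℝ) :
    HasSum (fun n : ℕ => c ^ n / n ! * halfGaussMoment (ν + n))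
      (∫ t in Ioi (0 : ℝ), t ^ (ν - 1) * exp (-t ^ 2 / 2) * exp (c * t)) := by
  have hint : IntegrableOn (fun t => t ^ (ν - 1) * exp (-t ^ 2 / 2) * exp (|c| * |t|)) (Ioi 0) :=
    (integrableOn_Ioi_rpow_mul_exp_neg_sq_div_two_mul_exp hν |c|).congr_fun
      (fun t ht => by rw [abs_of_pos (mem_Ioi.mp ht)]) measurableSet_Ioi
  refine (hasSum_integral_mul_exp_mul c hint).congr_fun fun n => ?_
  rw [← integral_Ioi_rpow_mul_exp_neg_sq_div_two (by positivity)]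
  congr 1
  refine setIntegral_congr_fun measurableSet_Ioi fun t ht => ?_
  rw [add_sub_right_comm, rpow_add_natCast (mem_Ioi.mp ht).ne']
  ring

theorem setIntegral_Ioi_rpow_mul_exp_neg_sq_div_two_mul_exp_neg_mul {ν : ℝ} (hν : 0 < ν) (z : ℝ) :
    ∫ t in Ioi (0 : ℝ), t ^ (ν - 1) * exp (-t ^ 2 / 2) * exp (-z * t) =
      halfGaussMoment ν * evenSeries ν z - halfGaussMoment (ν + 1) * oddSeries ν z := by
  set a : ℕ → ℝ := fun n => (-z) ^ n / n ! * halfGaussMoment (ν + n) with ha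
  have ha_summable : Summable a :=
    (hasSum_pow_div_factorial_mul_halfGaussMoment hν |z|).summable.of_norm_bounded fun n => by
      rw [ha, norm_mul, norm_div, norm_pow, norm_neg, Real.norm_eq_abs, RCLike.norm_natCast,
        Real.norm_of_nonneg (halfGaussMoment_pos (by positivity)).le]
  have h_even : ∀ k : ℕ, a (2 * k) = halfGaussMoment ν *
      ((∏ j ∈ range k, (ν + 2 * (j : ℝ))) * z ^ (2 * k) / (2 * k)!) := by
    intro k
    rw [ha]
    dsimp only
    rw [Nat.cast_mul, Nat.cast_ofNat, halfGaussMoment_add_two_mul_nat hν, (even_two_mul k).neg_pow]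
    ring
  have h_odd : ∀ k : ℕ, a (2 * k + 1) = -halfGaussMoment (ν + 1) *
      ((∏ j ∈ range k, (ν + 2 * (j : ℝ) + 1)) * z ^ (2 * k + 1) / (2 * k + 1)!) := by
    intro k
    rw [ha]
    dsimp only
    rw [show ν + ((2 * k + 1 : ℕ) : ℝ) = ν + 1 + 2 * k by push_cast; ring,
      halfGaussMoment_add_two_mul_nat (by linarith), (odd_two_mul_add_one k).neg_pow]
    simp only [add_right_comm ν 1]
    ring
  have hM := halfGaussMoment_pos hν
  have hM₁ := halfGaussMoment_pos (by linarith : 0 < ν + 1)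
  have h_even_sum : HasSum (fun k => a (2 * k)) (halfGaussMoment ν * evenSeries ν z) := by
    have h := ha_summable.comp_injective (mul_right_injective₀ two_ne_zero)
    simp only [Function.comp_def, h_even, summable_mul_left_iff hM.ne'] at h ⊢
    exact h.hasSum.mul_left _
  have h_odd_sum : HasSum (fun k => a (2 * k + 1)) (-halfGaussMoment (ν + 1) * oddSeries ν z) := by
    have h := ha_summable.comp_injective
      ((add_left_injective 1).comp (mul_right_injective₀ (two_ne_zero : (2 : ℕ) ≠ 0)))
    simp only [Function.comp_def, h_odd, summable_mul_left_iff (neg_ne_zero.mpr hM₁.ne')] at h ⊢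
    exact h.hasSum.mul_left _
  rw [(hasSum_pow_div_factorial_mul_halfGaussMoment hν (-z)).unique
    (h_even_sum.even_add_odd h_odd_sum)]
  ring

theorem Dtilde_eq_integral {ν : ℝ} (hν : 0 < ν) (z : ℝ) :
    Dtilde ν z = (∫ t in Ioi (0 : ℝ), t ^ (ν - 1) * exp (-t ^ 2 / 2) * exp (-z * t)) / Gamma ν := by
  set q : ℝ := 2 ^ (ν / 2) with hq_def
  have hq : 0 < q := rpow_pos_of_pos two_pos _
  have h_neg : (2 : ℝ) ^ (-ν / 2) = q⁻¹ := by rw [neg_div, rpow_neg zero_le_two]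
  have h_even : (2 : ℝ) ^ (ν / 2 - 1) = q / 2 := by rw [rpow_sub two_pos, rpow_one]
  have h_odd : (2 : ℝ) ^ ((ν + 1) / 2 - 1) = q * √2 / 2 := by
    rw [show (ν + 1) / 2 - 1 = ν / 2 + 1 / 2 - 1 by ring, rpow_sub two_pos, rpow_add two_pos,
      ← sqrt_eq_rpow, rpow_one]
  have h_dup : (2 : ℝ) ^ (1 - ν) = 2 / q ^ 2 := by
    rw [rpow_sub two_pos, rpow_one, hq_def, ← rpow_natCast, ← rpow_mul zero_le_two]
    norm_num
  have hΓ : Gamma ν = Gamma (ν / 2) * Gamma ((ν + 1) / 2) * q ^ 2 / (2 * √π) := by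
    have := Gamma_mul_Gamma_add_half (ν / 2)
    rw [show ν / 2 + 1 / 2 = (ν + 1) / 2 by ring, mul_div_cancel₀ ν two_ne_zero, h_dup] at this
    rw [this]
    field_simp
  rw [setIntegral_Ioi_rpow_mul_exp_neg_sq_div_two_mul_exp_neg_mul hν, Dtilde, halfGaussMoment,
    halfGaussMoment, h_neg, h_even, h_odd, hΓ]
  field_simp

/-- For every `ν > 0` and every `z ∈ ℝ`, the modified parabolic cylinder function is
strictly positive: `D̃_ν(z) > 0`. -/
theorem Dtilde_pos (ν : ℝ) (hν : 0 < ν) (z : ℝ) :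
    0 < Dtilde ν z := by
  rw [Dtilde_eq_integral hν]
  exact div_pos (setIntegral_Ioi_rpow_mul_exp_neg_sq_div_two_mul_exp_pos hν (-z))
    (Gamma_pos_of_pos hν)
end

section
/- Let a, σ̃ > 0 and b > 0, and set σ = σ̃/√(2a). Then the function g(r) = D̃_{b/a}((r − b)/σ) is twice differentiable on ℝ and satisfies the second-order ODE (σ̃²/2)·g''(r) + a(b − r)·g'(r) − b·g(r) = 0 for all r ∈ ℝ. -/
open Real Filter Finset MeasureTheory

/-!
`D̃_ν = ∑ dₙ yⁿ / n!` for the sequence with `d₀, d₁` read off the definition and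
`dₙ₊₂ = (ν + n) dₙ`: its even and odd parts are the two series of `D̃_ν`. Differentiating
shifts the coefficients, and `y D̃'` has coefficients `n dₙ`, so the recurrence is exactly the
equation `D̃'' = y D̃' + ν D̃`; the series converge on all of `ℝ` since terms two apart have ratio
`(ν + n) y² / ((n + 1)(n + 2)) → 0`. The Ornstein–Uhlenbeck equation is this equation after the
substitution `y = (r − b)/σ`, because `σ̃² = 2aσ²`.
-/

open scoped Nat

theorem summable_of_norm_add_two_eventually_le {E : Type*} [SeminormedAddCommGroup E]
    [CompleteSpace E] {f : ℕ → E} {r : ℝ} (hr : r < 1)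
    (h : ∀ᶠ n in atTop, ‖f (n + 2)‖ ≤ r * ‖f n‖) : Summable f := by
  obtain ⟨N, hN⟩ := eventually_atTop.1 h
  refine .even_add_odd (summable_of_ratio_norm_eventually_le hr ?_)
    (summable_of_ratio_norm_eventually_le hr ?_) <;>
  exact eventually_atTop.2 ⟨N, fun k hk => by simpa only [mul_add] using hN _ (by omega)⟩

theorem succ_mul_pow_le_two_mul_add_one_pow {x : ℝ} (hx : 0 ≤ x) (n : ℕ) :
    (n + 1) * x ^ n ≤ (2 * x + 1) ^ (n + 1) := by
  have hn : (n + 1 : ℝ) ≤ 2 ^ n := by exact_mod_cast Nat.lt_two_pow_self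
  calc (n + 1) * x ^ n ≤ 2 ^ n * x ^ n := by gcongr
    _ = (2 * x) ^ n := (mul_pow _ _ _).symm
    _ ≤ (2 * x + 1) ^ n := by gcongr; linarith
    _ ≤ (2 * x + 1) ^ (n + 1) := pow_le_pow_right₀ (by linarith) n.le_succ

noncomputable def egf (a : ℕ → ℝ) (z : ℝ) : ℝ :=
  ∑' n, a n * z ^ n / n !

namespace egf

variable {a : ℕ → ℝ}

theorem summable_shift (ha : ∀ z, Summable fun n => a n * z ^ n / n !) (z : ℝ) :
    Summable fun n => a (n + 1) * z ^ n / n ! := by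
  refine .of_norm_bounded ((summable_nat_add_iff 1).2 (ha (2 * |z| + 1)).abs) fun n => ?_
  have hz := succ_mul_pow_le_two_mul_add_one_pow (abs_nonneg z) n
  have hR : |2 * |z| + 1| = 2 * |z| + 1 := abs_of_nonneg (by positivity)
  simp only [Real.norm_eq_abs, abs_div, abs_mul, abs_pow, Nat.abs_cast, hR]
  rw [Nat.factorial_succ, Nat.cast_mul, div_le_div_iff₀ (by positivity) (by positivity)]
  push_cast
  calc |a (n + 1)| * |z| ^ n * ((n + 1) * n !) = |a (n + 1)| * ((n + 1) * |z| ^ n) * n ! := by ring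
    _ ≤ |a (n + 1)| * (2 * |z| + 1) ^ (n + 1) * n ! := by gcongr

theorem hasDerivAt (ha : ∀ z, Summable fun n => a n * z ^ n / n !) (z : ℝ) :
    HasDerivAt (egf a) (egf (fun n => a (n + 1)) z) z := by
  set R := |z| + 1
  have hterm (n : ℕ) (y : ℝ) : HasDerivAt (fun y => a (n + 1) * y ^ (n + 1) / (n + 1 : ℕ)!)
      (a (n + 1) * y ^ n / n !) y := by
    refine (((hasDerivAt_pow (n + 1) y).const_mul (a (n + 1))).div_const _).congr_deriv ?_
    rw [Nat.factorial_succ, Nat.cast_mul]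
    field_simp
    push_cast
    ring
  have hbound (n : ℕ) (y : ℝ) (hy : y ∈ Metric.ball 0 R) :
      ‖a (n + 1) * y ^ n / (n ! : ℝ)‖ ≤ ‖a (n + 1) * R ^ n / (n ! : ℝ)‖ := by
    simp only [norm_div, norm_mul, norm_pow]
    gcongr
    rw [mem_ball_zero_iff] at hy
    exact hy.le.trans (le_norm_self R)
  have hz : z ∈ Metric.ball (0 : ℝ) R := by
    rw [mem_ball_zero_iff, Real.norm_eq_abs]; linarith
  have hsplit : egf a = fun y => a 0 + ∑' n, a (n + 1) * y ^ (n + 1) / (n + 1 : ℕ)! := by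
    ext y
    rw [egf, (ha y).tsum_eq_zero_add]
    simp
  rw [hsplit]
  exact (hasDerivAt_tsum_of_isPreconnected (summable_shift ha R).norm Metric.isOpen_ball
    (convex_ball 0 R).isPreconnected (fun n y _ => hterm n y) hbound hz
    ((summable_nat_add_iff 1).2 (ha z)) hz).const_add (a 0)

theorem hasSum_natCast_mul (ha : ∀ z, Summable fun n => a n * z ^ n / n !) (z : ℝ) :
    HasSum (fun n : ℕ => (n : ℝ) * a n * z ^ n / n !) (z * egf (fun n => a (n + 1)) z) := by
  have hshift : (fun n => ((n + 1 : ℕ) : ℝ) * a (n + 1) * z ^ (n + 1) / (n + 1 : ℕ)!) =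
      fun n => z * (a (n + 1) * z ^ n / n !) := by
    ext n
    rw [Nat.factorial_succ, Nat.cast_mul]
    field_simp
    ring
  have h : HasSum (fun n => ((n + 1 : ℕ) : ℝ) * a (n + 1) * z ^ (n + 1) / (n + 1 : ℕ)!)
      (z * egf (fun n => a (n + 1)) z) := by
    rw [hshift]
    exact (summable_shift ha z).hasSum.mul_left z
  simpa using HasSum.zero_add (f := fun n : ℕ => (n : ℝ) * a n * z ^ n / n !) h

theorem eq_mul_add_of_recurrence {ν : ℝ} (hrec : ∀ n, a (n + 2) = (ν + n) * a n)
    (ha : ∀ z, Summable fun n => a n * z ^ n / n !) (z : ℝ) :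
    egf (fun n => a (n + 2)) z = z * egf (fun n => a (n + 1)) z + ν * egf a z := by
  refine HasSum.tsum_eq ?_
  convert (hasSum_natCast_mul ha z).add ((ha z).hasSum.mul_left ν) using 1
  · ext n
    dsimp only
    rw [hrec]
    ring
  · rfl

theorem summable_of_recurrence {ν : ℝ} (hrec : ∀ n, a (n + 2) = (ν + n) * a n) (z : ℝ) :
    Summable fun n => a n * z ^ n / n ! := by
  obtain ⟨N, hN⟩ := exists_nat_ge (|ν| + 4 * z ^ 2)
  refine summable_of_norm_add_two_eventually_le (r := 1 / 2) (by norm_num)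
    (eventually_atTop.2 ⟨N, fun n hn => ?_⟩)
  have hn' : |ν| + 4 * z ^ 2 ≤ n := hN.trans (by exact_mod_cast hn)
  have hterm : (ν + n) * a n * z ^ (n + 2) / ((n + 2)! : ℝ) =
      (ν + n) * z ^ 2 / ((n + 1) * (n + 2)) * (a n * z ^ n / n !) := by
    rw [Nat.factorial_succ, Nat.factorial_succ]
    push_cast
    field_simp
    ring
  have hfactor : ‖(ν + n) * z ^ 2 / ((n + 1) * (n + 2))‖ ≤ 1 / 2 := by
    rw [norm_div, norm_mul, norm_pow, Real.norm_eq_abs, Real.norm_eq_abs, sq_abs,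
      Real.norm_of_nonneg (by positivity), div_le_div_iff₀ (by positivity) (by norm_num)]
    have := abs_add_le ν n
    rw [Nat.abs_cast] at this
    nlinarith [sq_nonneg z, abs_nonneg ν, (n.cast_nonneg : (0 : ℝ) ≤ n)]
  rw [hrec, hterm, norm_mul]
  exact mul_le_mul_of_nonneg_right hfactor (norm_nonneg _)

theorem exists_hasDerivAt_weber {ν : ℝ} (hrec : ∀ n, a (n + 2) = (ν + n) * a n) :
    ∃ D₁ D₂ : ℝ → ℝ, (∀ y, HasDerivAt (egf a) (D₁ y) y) ∧ (∀ y, HasDerivAt D₁ (D₂ y) y) ∧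
      ∀ y, D₂ y = y * D₁ y + ν * egf a y := by
  have ha := summable_of_recurrence hrec
  exact ⟨egf fun n => a (n + 1), egf fun n => a (n + 2), hasDerivAt ha,
    hasDerivAt (summable_shift ha), eq_mul_add_of_recurrence hrec ha⟩

end egf

/-- Taylor coefficients at `0` of the solution of `y'' = z y' + ν y` with `y 0 = p`, `y' 0 = q`. -/
def weberCoeff (ν p q : ℝ) : ℕ → ℝ
  | 0 => p
  | 1 => q
  | n + 2 => (ν + n) * weberCoeff ν p q n

section weberCoeff

variable (ν p q : ℝ)

theorem weberCoeff_add_two (n : ℕ) : weberCoeff ν p q (n + 2) = (ν + n) * weberCoeff ν p q n :=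
  rfl

theorem weberCoeff_two_mul (k : ℕ) :
    weberCoeff ν p q (2 * k) = p * ∏ j ∈ range k, (ν + 2 * (j : ℝ)) := by
  induction k with
  | zero => simp [weberCoeff]
  | succ k ih =>
    rw [mul_add, mul_one, weberCoeff_add_two, ih, prod_range_succ]
    push_cast
    ring

theorem weberCoeff_two_mul_add_one (k : ℕ) :
    weberCoeff ν p q (2 * k + 1) = q * ∏ j ∈ range k, (ν + 2 * (j : ℝ) + 1) := by
  induction k with
  | zero => simp [weberCoeff]
  | succ k ih =>
    rw [show 2 * (k + 1) + 1 = 2 * k + 1 + 2 by ring, weberCoeff_add_two, ih, prod_range_succ]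
    push_cast
    ring

theorem egf_weberCoeff (z : ℝ) :
    egf (weberCoeff ν p q) z = p * evenSeries ν z + q * oddSeries ν z := by
  have hs := egf.summable_of_recurrence (weberCoeff_add_two ν p q) z
  have htwo : Function.Injective (2 * · : ℕ → ℕ) := mul_right_injective₀ two_ne_zero
  rw [egf, ← tsum_even_add_odd (f := fun n => weberCoeff ν p q n * z ^ n / n !)
    (hs.comp_injective htwo) (hs.comp_injective ((add_left_injective 1).comp htwo)), evenSeries, oddSeries, ← tsum_mul_left, ← tsum_mul_left]
  congr 1 <;> refine tsum_congr fun k => ?_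
  · rw [weberCoeff_two_mul]
    ring
  · rw [weberCoeff_two_mul_add_one]
    ring

end weberCoeff

theorem Dtilde_eq_egf (ν : ℝ) :
    Dtilde ν = egf (weberCoeff ν ((2 : ℝ) ^ (-ν / 2) * √π / Gamma ((ν + 1) / 2))
      (-((2 : ℝ) ^ (-ν / 2) * √π * √2 / Gamma (ν / 2)))) := by
  ext y
  rw [egf_weberCoeff, Dtilde]
  ring

theorem Dtilde_exists_hasDerivAt_weber (ν : ℝ) :
    ∃ D₁ D₂ : ℝ → ℝ, (∀ y, HasDerivAt (Dtilde ν) (D₁ y) y) ∧ (∀ y, HasDerivAt D₁ (D₂ y) y) ∧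
      ∀ y, D₂ y = y * D₁ y + ν * Dtilde ν y := by
  rw [Dtilde_eq_egf]
  exact egf.exists_hasDerivAt_weber (weberCoeff_add_two ν _ _)

theorem Dtilde_comp_increasing_solves_OU_ODE_general (a σt b : ℝ)
    (ha : 0 < a) (hσ : 0 < σt) :
    ∃ g' g'' : ℝ → ℝ,
      (∀ r : ℝ,
        HasDerivAt (fun r : ℝ => Dtilde (b / a) ((r - b) / (σt / Real.sqrt (2 * a))))
          (g' r) r) ∧
      (∀ r : ℝ, HasDerivAt g' (g'' r) r) ∧
      (∀ r : ℝ,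
        σt ^ 2 / 2 * g'' r + a * (b - r) * g' r -
          b * Dtilde (b / a) ((r - b) / (σt / Real.sqrt (2 * a))) = 0) := by
  obtain ⟨D₁, D₂, hD₁, hD₂, hweber⟩ := Dtilde_exists_hasDerivAt_weber (b / a)
  set σ := σt / √(2 * a)
  have hσ₀ : σ ≠ 0 := by positivity
  have hσt : σt ^ 2 = 2 * a * σ ^ 2 := by
    rw [div_pow, sq_sqrt (by positivity)]
    field_simp
  have hy (r : ℝ) : HasDerivAt (fun r => (r - b) / σ) (1 / σ) r :=
    ((hasDerivAt_id r).sub_const b).div_const σ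
  refine ⟨fun r => D₁ ((r - b) / σ) * (1 / σ), fun r => D₂ ((r - b) / σ) * (1 / σ) * (1 / σ),
    fun r => (hD₁ _).comp r (hy r), fun r => ((hD₂ _).comp r (hy r)).mul_const _, fun r => ?_⟩
  dsimp only
  rw [hweber, hσt]
  field_simp
  ring

/-- Let `a, σ̃ > 0` and `b > 0`, and set `σ = σ̃/√(2a)`. Then
`g(r) = D̃_{b/a}((r − b)/σ)` is twice differentiable on `ℝ` and satisfies
`(σ̃²/2) g''(r) + a (b − r) g'(r) − b g(r) = 0` for all `r ∈ ℝ`. -/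
theorem Dtilde_comp_increasing_solves_OU_ODE (a σt b : ℝ)
    (ha : 0 < a) (hσ : 0 < σt) (hb : 0 < b) :
    ∃ g' g'' : ℝ → ℝ,
      (∀ r : ℝ,
        HasDerivAt (fun r : ℝ => Dtilde (b / a) ((r - b) / (σt / Real.sqrt (2 * a))))
          (g' r) r) ∧
      (∀ r : ℝ, HasDerivAt g' (g'' r) r) ∧
      (∀ r : ℝ,
        σt ^ 2 / 2 * g'' r + a * (b - r) * g' r -
          b * Dtilde (b / a) ((r - b) / (σt / Real.sqrt (2 * a))) = 0) :=
  Dtilde_comp_increasing_solves_OU_ODE_general a σt b ha hσ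
end
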